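/- Let 1 ≤ d ≤ d' be integers and ω = e^{2πi/d}. For l ∈ {0,…,d'−1} and a ∈ {0,…,d−1} define Q_l^a ∈ M_{d×d'} by Q_l^a(r,j) = ω^{a·r} if j ≡ r + l (mod d') and 0 otherwise (rows r ∈ {0,…,d−1}, columns j ∈ {0,…,d'−1}). Then each Q_l^a satisfies Q_l^a·(Q_l^a)ᴴ = I_d, and Tr((Q_l^a)ᴴ Q_{l'}^{a'}) = d·δ_{l l'}·δ_{a a'} for all l, l' ∈ {0,…,d'−1} and a, a' ∈ {0,…,d−1}. Consequently, the d·d' matrices {Q_l^a} form an SV1Bd in M_{d×d'}, i.e., a maximally entangled basis of ℂ^d ⊗ ℂ^{d'} under vectorization. -/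

import Mathlib

/-! Each `Q_l^a` is `diag(ω^{a r})` followed by the partial permutation `r ↦ r + l (mod d')`,
which is injective because `d ≤ d'`. Hence `Q Qᴴ = diag |ω^{a r}|² = I`, and
`Tr((Q_l^a)ᴴ Q_{l'}^{a'})` vanishes unless the two shifts agree row by row, i.e. `l = l'`; then it
is the geometric sum `∑_r ω^{(a'-a) r}`, which is `d δ_{aa'}` since `ω` is a primitive `d`-th
root of unity and `|a' - a| < d`. -/

open Matrix

/-- The matrix `Q_l^a ∈ M_{d×d'}` with `Q_l^a(r,j) = ω^{a·r}` (`ω = e^{2πi/d}`) if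
`j ≡ r + l (mod d')`, and `0` otherwise. -/
noncomputable def Qmat (d d' : ℕ) (l a : ℕ) : Matrix (Fin d) (Fin d') ℂ :=
  fun r j => if (j : ℕ) % d' = ((r : ℕ) + l) % d'
    then Complex.exp (2 * Real.pi * Complex.I / d) ^ (a * (r : ℕ)) else 0

open Finset

section MonomialRows

variable {m n R : Type*} [Fintype n] [DecidableEq n] [CommSemiring R] [StarRing R]

theorem of_ite_mul_conjTranspose [DecidableEq m] {σ : m → n} (hσ : Function.Injective σ)
    (c : m → R) :
    (of fun r j => if j = σ r then c r else 0) *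
        (of fun r j => if j = σ r then c r else 0)ᴴ =
      diagonal fun r => c r * star (c r) := by
  ext r r'
  rcases eq_or_ne r r' with rfl | h
  · simp [mul_apply, apply_ite star]
  · simp [mul_apply, apply_ite star, hσ.eq_iff, h, h.symm]

theorem trace_conjTranspose_of_ite_mul_of_ite [Fintype m] (σ τ : m → n) (c e : m → R) :
    ((of fun r j => if j = σ r then c r else 0)ᴴ *
        of fun r j => if j = τ r then e r else 0).trace =
      ∑ r, if σ r = τ r then star (c r) * e r else 0 := by
  simp only [trace, diag_apply, mul_apply]
  rw [sum_comm]
  refine sum_congr rfl fun r _ => ?_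
  simp [apply_ite star, eq_comm]

end MonomialRows

theorem IsPrimitiveRoot.geom_sum_zpow_eq_ite {K : Type*} [Field K] {ζ : K} {d : ℕ}
    (hζ : IsPrimitiveRoot ζ d) (j : ℤ) :
    ∑ r ∈ range d, (ζ ^ j) ^ r = if (d : ℤ) ∣ j then (d : K) else 0 := by
  split_ifs with hj
  · simp [(hζ.zpow_eq_one_iff_dvd j).2 hj]
  · have hpow : (ζ ^ j) ^ d = 1 := by
      rw [← zpow_natCast, ← _root_.zpow_mul, mul_comm, _root_.zpow_mul, zpow_natCast,
        hζ.pow_eq_one, _root_.one_zpow]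
    rw [geom_sum_eq (mt (hζ.zpow_eq_one_iff_dvd j).1 hj), hpow, sub_self, zero_div]

theorem IsPrimitiveRoot.sum_star_pow_mul_pow {ζ : ℂ} {d : ℕ} (hζ : IsPrimitiveRoot ζ d)
    (a a' : Fin d) :
    ∑ r : Fin d, star (ζ ^ ((a : ℕ) * r)) * ζ ^ ((a' : ℕ) * r) =
      if a = a' then (d : ℂ) else 0 := by
  have hζ0 : ζ ≠ 0 := hζ.ne_zero (Fin.pos a).ne'
  have hnorm (n : ℕ) : ‖ζ ^ n‖ = 1 := by
    rw [norm_pow, hζ.norm'_eq_one (Fin.pos a).ne', one_pow]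
  have hterm (r : ℕ) :
      star (ζ ^ ((a : ℕ) * r)) * ζ ^ ((a' : ℕ) * r) = (ζ ^ ((a' : ℤ) - a)) ^ r := by
    rw [Complex.star_def, ← Complex.inv_eq_conj (hnorm _), ← zpow_natCast, ← zpow_natCast,
      ← zpow_natCast, ← _root_.zpow_neg, ← zpow_add₀ hζ0, ← _root_.zpow_mul]
    push_cast; ring_nf
  simp only [hterm, Fin.sum_univ_eq_sum_range (fun r => (ζ ^ ((a' : ℤ) - a)) ^ r),
    hζ.geom_sum_zpow_eq_ite]
  congr 1
  refine propext ⟨fun h => ?_, fun h => by simp [h]⟩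
  have hdiff := Int.eq_zero_of_abs_lt_dvd h (abs_sub_lt_iff.2 ⟨by omega, by omega⟩)
  exact (Fin.ext (by omega)).symm

theorem norm_exp_two_pi_I_div (d : ℕ) : ‖Complex.exp (2 * Real.pi * Complex.I / d)‖ = 1 := by
  rw [Complex.norm_exp]
  simp

theorem Qmat_eq_of {d d' : ℕ} (hdd : d ≤ d') (l : Fin d') (a : ℕ) :
    Qmat d d' l a = of fun r j => if j = Fin.castLE hdd r + l
      then Complex.exp (2 * Real.pi * Complex.I / d) ^ (a * (r : ℕ)) else 0 := by
  ext r j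
  simp [Qmat, Fin.ext_iff, Fin.val_add, Nat.mod_eq_of_lt j.isLt]

theorem Qmat_meb_general (d d' : ℕ) (hdd : d ≤ d') :
    (∀ (l : Fin d') (a : Fin d),
      Qmat d d' (l : ℕ) (a : ℕ) * (Qmat d d' (l : ℕ) (a : ℕ))ᴴ = 1) ∧
    (∀ (l l' : Fin d') (a a' : Fin d),
      ((Qmat d d' (l : ℕ) (a : ℕ))ᴴ * Qmat d d' (l' : ℕ) (a' : ℕ)).trace =
        if l = l' ∧ a = a' then (d : ℂ) else 0) := by
  refine ⟨fun l a => ?_, fun l l' a a' => ?_⟩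
  · have hshift : Function.Injective fun r : Fin d => Fin.castLE hdd r + l :=
      (add_left_injective l).comp (Fin.castLE_injective hdd)
    rw [Qmat_eq_of hdd, of_ite_mul_conjTranspose hshift, ← diagonal_one]
    congr 1
    funext r
    rw [Complex.star_def, Complex.mul_conj', norm_pow, norm_exp_two_pi_I_div]
    simp
  · rw [Qmat_eq_of hdd, Qmat_eq_of hdd, trace_conjTranspose_of_ite_mul_of_ite]
    simp only [add_right_inj]
    by_cases hl : l = l'
    · simp only [hl, true_and, if_true]
      rw [(Complex.isPrimitiveRoot_exp d (Fin.pos a).ne').sum_star_pow_mul_pow]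
    · simp [hl]

/-- for `1 ≤ d ≤ d'`, the matrices `Q_l^a` (`l ∈ [d']*`, `a ∈ [d]*`)
satisfy `Q_l^a (Q_l^a)ᴴ = I_d` and `Tr((Q_l^a)ᴴ Q_{l'}^{a'}) = d·δ_{ll'}δ_{aa'}`;
hence the `d·d'` matrices `{Q_l^a}` form an SV1Bd in `M_{d×d'}`, i.e., a maximally
entangled basis of `ℂ^d ⊗ ℂ^{d'}`. -/
theorem Qmat_meb (d d' : ℕ) (hd : 1 ≤ d) (hdd : d ≤ d') :
    (∀ (l : Fin d') (a : Fin d),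
      Qmat d d' (l : ℕ) (a : ℕ) * (Qmat d d' (l : ℕ) (a : ℕ))ᴴ = 1) ∧
    (∀ (l l' : Fin d') (a a' : Fin d),
      ((Qmat d d' (l : ℕ) (a : ℕ))ᴴ * Qmat d d' (l' : ℕ) (a' : ℕ)).trace =
        if l = l' ∧ a = a' then (d : ℂ) else 0) :=
  Qmat_meb_general d d' hdd
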